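/- arXiv:2108.08714 — 2 statements merged into one kernel-verified Lean document; each statement's English description precedes it below -/
import Mathlib

section
/- Let BV be a Banach algebra-like space of functions with norm satisfying ‖fg‖ ≤ C‖f‖·‖g‖ for a constant C ≥ 1. Let L^n_ω : BV → BV be linear operators (for ω in a probability space Ω with ergodic invertible σ) satisfying ‖L^n_ω h‖ ≤ D(ω) e^{-λ n} ‖h‖ for all h in a subspace, where λ > 0 and D is tempered. If K is tempered with ‖1/v^0_ω‖ ≤ K(ω) and K(σ^n ω) ≤ K(ω) e^{(λ/2)n}, and v^0 satisfies L^n_ω(h v^0_ω) = (L^n_ω h) v^0_{σ^n ω} normalization, then the normalized operators satisfy ‖(1/v^0_{σ^n ω}) L^n_ω(h v^0_ω)‖ ≤ C² D(ω) K(ω) ‖v^0_ω‖ e^{-(λ/2)n} ‖h‖. -/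
open MeasureTheory

/-- The key norm estimate for normalized transfer operators: if `‖fg‖ ≤ C‖f‖‖g‖`,
`‖Lⁿ(h v⁰_ω)‖ ≤ D(ω) e^{-λn} ‖h v⁰_ω‖`, `‖1/v⁰_{σⁿω}‖ ≤ K(σⁿω)` and
`K(σⁿω) ≤ K(ω) e^{(λ/2)n}`, then the normalized operator satisfies
`‖(1/v⁰_{σⁿω}) · Lⁿ(h v⁰_ω)‖ ≤ C² D(ω) K(ω) ‖v⁰_ω‖ e^{-(λ/2)n} ‖h‖`. -/
theorem stmt4 {A : Type*} [NormedAddCommGroup A] [Ring A]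
    (C : ℝ) (hC : 1 ≤ C) (hmul : ∀ a b : A, ‖a * b‖ ≤ C * ‖a‖ * ‖b‖)
    (L : A → A) (n : ℕ) (lam D Kn K0 : ℝ) (hlam : 0 < lam) (hD : 0 ≤ D) (hK0 : 0 ≤ K0)
    (h v0 w : A)
    -- `w` plays the role of `1/v⁰_{σⁿω}`
    (hdec : ‖L (h * v0)‖ ≤ D * Real.exp (-lam * n) * ‖h * v0‖)
    (hw : ‖w‖ ≤ Kn)
    (hKn : Kn ≤ K0 * Real.exp (lam / 2 * n)) :
    ‖w * L (h * v0)‖ ≤ C ^ 2 * D * K0 * ‖v0‖ * Real.exp (-(lam / 2) * n) * ‖h‖ := by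
  have hC0 : 0 ≤ C := le_trans zero_le_one hC
  have hwK0 : ‖w‖ ≤ K0 * Real.exp (lam / 2 * n) := hw.trans hKn
  have hhv : ‖h * v0‖ ≤ C * ‖h‖ * ‖v0‖ := hmul h v0
  have e1 : ‖w * L (h * v0)‖ ≤ C * ‖w‖ * ‖L (h * v0)‖ := hmul _ _
  have hLpos : 0 ≤ ‖L (h * v0)‖ := norm_nonneg _
  have e2 : ‖L (h * v0)‖ ≤ D * Real.exp (-lam * n) * (C * ‖h‖ * ‖v0‖) := by
    refine hdec.trans ?_
    have : 0 ≤ D * Real.exp (-lam * n) := mul_nonneg hD (Real.exp_pos _).le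
    exact mul_le_mul_of_nonneg_left hhv this
  have key : ‖w * L (h * v0)‖ ≤
      C * (K0 * Real.exp (lam / 2 * n)) * (D * Real.exp (-lam * n) * (C * ‖h‖ * ‖v0‖)) := by
    calc ‖w * L (h * v0)‖ ≤ C * ‖w‖ * ‖L (h * v0)‖ := e1
      _ ≤ C * (K0 * Real.exp (lam / 2 * n)) * ‖L (h * v0)‖ := by
          apply mul_le_mul_of_nonneg_right _ hLpos
          exact mul_le_mul_of_nonneg_left hwK0 hC0
      _ ≤ C * (K0 * Real.exp (lam / 2 * n)) * (D * Real.exp (-lam * n) * (C * ‖h‖ * ‖v0‖)) := by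
          apply mul_le_mul_of_nonneg_left e2
          positivity
  refine key.trans_eq ?_
  have hexp : Real.exp (lam / 2 * n) * Real.exp (-lam * n) = Real.exp (-(lam / 2) * n) := by
    rw [← Real.exp_add]; ring_nf
  calc C * (K0 * Real.exp (lam / 2 * n)) * (D * Real.exp (-lam * n) * (C * ‖h‖ * ‖v0‖))
      = C ^ 2 * D * K0 * ‖v0‖ * (Real.exp (lam / 2 * n) * Real.exp (-lam * n)) * ‖h‖ := by ring
    _ = C ^ 2 * D * K0 * ‖v0‖ * Real.exp (-(lam / 2) * n) * ‖h‖ := by rw [hexp]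
end

section
/- Let (Ω,℘, σ) be ergodic, and v_ω > 0 measurable densities with ∫ v_ω dm = 1 satisfying v_{σⁿω} = Lⁿ_ω v_ω, where essinf Lⁿ_ω 1 ≥ Π_{k=0}^{n-1} essinf L_{σ^k ω} 1 and log(essinf L_ω 1) ∈ L¹(ℙ). Assume essinf v_ω > 0 a.e. Then for a.e. ω, liminf_{n→∞} (1/n) log(essinf v_{σⁿω}) ≥ ∫_Ω log(essinf L_ω 1) dℙ > −∞, and since essinf v_ω ≤ 1 a.e., it follows that lim_{n→∞} (1/n) log(essinf v_{σⁿω}) = 0, i.e. ω ↦ essinf v_ω is tempered along forward orbits. -/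
set_option linter.unusedSectionVars false

open MeasureTheory Filter Function

section Maximal

variable {Ω : Type*} [MeasurableSpace Ω] (σ : Ω → Ω) (f : Ω → ℝ)

/-- `maxS σ f n ω = max_{0 ≤ k ≤ n} S_k f ω` where `S_0 = 0`. -/
noncomputable def maxS : ℕ → Ω → ℝ
  | 0, _ => 0
  | n+1, ω => max (maxS n ω) (birkhoffSum σ f (n+1) ω)

variable {σ f}

lemma maxS_nonneg (n : ℕ) (ω : Ω) : 0 ≤ maxS σ f n ω := by
  induction n with
  | zero => simp [maxS]
  | succ n ih => exact le_trans ih (le_max_left _ _)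

lemma birkhoffSum_le_maxS {k n : ℕ} (hk : k ≤ n) (ω : Ω) :
    birkhoffSum σ f k ω ≤ maxS σ f n ω := by
  induction n with
  | zero =>
    interval_cases k
    simp [maxS, birkhoffSum_zero]
  | succ n ih =>
    rcases Nat.lt_or_ge k (n+1) with h | h
    · exact le_trans (ih (Nat.lt_succ_iff.mp h)) (le_max_left _ _)
    · have : k = n + 1 := le_antisymm hk h
      subst this
      exact le_max_right _ _

lemma maxS_measurable (hσ : Measurable σ) (hf : Measurable f) (n : ℕ) :
    Measurable (maxS σ f n) := by
  induction n with
  | zero => exact measurable_const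
  | succ n ih =>
    exact ih.max (by
      have : Measurable fun ω => birkhoffSum σ f (n+1) ω := by
        unfold birkhoffSum
        exact Finset.measurable_sum _ fun k _ => hf.comp (hσ.iterate k)
      exact this)

lemma birkhoffSum_measurable (hσ : Measurable σ) (hf : Measurable f) (n : ℕ) :
    Measurable fun ω => birkhoffSum σ f n ω := by
  unfold birkhoffSum
  exact Finset.measurable_sum _ fun k _ => hf.comp (hσ.iterate k)

lemma maxS_key {n : ℕ} {ω : Ω} (h : 0 < maxS σ f n ω) :
    maxS σ f n ω ≤ f ω + maxS σ f n (σ ω) := by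
  -- there is 1 ≤ k ≤ n with maxS = S_k
  have : ∃ k, 1 ≤ k ∧ k ≤ n ∧ maxS σ f n ω = birkhoffSum σ f k ω := by
    induction n with
    | zero => simp [maxS] at h
    | succ n ih =>
      rcases max_cases (maxS σ f n ω) (birkhoffSum σ f (n+1) ω) with ⟨he, _⟩ | ⟨he, _⟩
      · have h' : 0 < maxS σ f n ω := by
          have hh : maxS σ f (n+1) ω = maxS σ f n ω := he
          rwa [hh] at h
        obtain ⟨k, h1, h2, h3⟩ := ih h'
        exact ⟨k, h1, h2.trans (Nat.le_succ n), by simpa [maxS, he] using h3⟩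
      · exact ⟨n+1, Nat.succ_le_succ (Nat.zero_le n), le_rfl, by simpa [maxS] using he⟩
  obtain ⟨k, h1, h2, h3⟩ := this
  rw [h3]
  obtain ⟨k, rfl⟩ := Nat.exists_eq_add_of_le h1
  rw [add_comm 1 k, birkhoffSum_succ' σ f k ω]
  have : birkhoffSum σ f k (σ ω) ≤ maxS σ f n (σ ω) :=
    birkhoffSum_le_maxS (by omega) _
  linarith

end Maximal

section MaximalErgodic

variable {Ω : Type*} [MeasurableSpace Ω] {ℙ : Measure Ω} {σ : Ω → Ω} {f : Ω → ℝ}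

lemma birkhoffSum_integrable (hσ : MeasurePreserving σ ℙ ℙ) (hf : Measurable f)
    (hfi : Integrable f ℙ) (n : ℕ) : Integrable (fun ω => birkhoffSum σ f n ω) ℙ := by
  unfold birkhoffSum
  apply integrable_finset_sum
  intro k _
  exact ((hσ.iterate k).integrable_comp hfi.aestronglyMeasurable).2 hfi

lemma maxS_integrable (hσ : MeasurePreserving σ ℙ ℙ) (hf : Measurable f)
    (hfi : Integrable f ℙ) (n : ℕ) : Integrable (maxS σ f n) ℙ := by
  induction n with
  | zero => simpa [maxS] using integrable_const (0:ℝ)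
  | succ n ih =>
    have := birkhoffSum_integrable hσ hf hfi (n+1)
    exact ih.sup this

/-- The maximal ergodic theorem (Garsia's proof). -/
lemma maximal_ergodic (hσ : MeasurePreserving σ ℙ ℙ) (hf : Measurable f)
    (hfi : Integrable f ℙ) (n : ℕ) :
    0 ≤ ∫ ω in {ω | 0 < maxS σ f n ω}, f ω ∂ℙ := by
  set E : Set Ω := {ω | 0 < maxS σ f n ω} with hE
  have hEm : MeasurableSet E := measurableSet_lt measurable_const (maxS_measurable hσ.measurable hf n)
  have hMi : Integrable (maxS σ f n) ℙ := maxS_integrable hσ hf hfi n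
  have hMσmeas : Measurable fun ω => maxS σ f n (σ ω) := (maxS_measurable hσ.measurable hf n).comp hσ.measurable
  have hMσi : Integrable (fun ω => maxS σ f n (σ ω)) ℙ :=
    (hσ.integrable_comp hMi.aestronglyMeasurable).2 hMi
  have key : ∀ ω ∈ E, maxS σ f n ω - maxS σ f n (σ ω) ≤ f ω := by
    intro ω hω
    have := maxS_key (σ := σ) (f := f) hω
    linarith
  have h1 : ∫ ω in E, (maxS σ f n ω - maxS σ f n (σ ω)) ∂ℙ ≤ ∫ ω in E, f ω ∂ℙ :=
    setIntegral_mono_on ((hMi.sub hMσi).integrableOn) hfi.integrableOn hEm key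
  have h2 : ∫ ω in E, (maxS σ f n ω - maxS σ f n (σ ω)) ∂ℙ
      = ∫ ω in E, maxS σ f n ω ∂ℙ - ∫ ω in E, maxS σ f n (σ ω) ∂ℙ :=
    integral_sub hMi.integrableOn hMσi.integrableOn
  have h3 : ∫ ω in E, maxS σ f n ω ∂ℙ = ∫ ω, maxS σ f n ω ∂ℙ := by
    rw [← integral_add_compl hEm hMi]
    have : ∫ ω in Eᶜ, maxS σ f n ω ∂ℙ = 0 := by
      apply setIntegral_eq_zero_of_forall_eq_zero
      intro ω hω
      have h0 : ¬ (0 < maxS σ f n ω) := hω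
      have := maxS_nonneg (σ := σ) (f := f) n ω
      linarith
    rw [this, add_zero]
  have h4 : ∫ ω in E, maxS σ f n (σ ω) ∂ℙ ≤ ∫ ω, maxS σ f n (σ ω) ∂ℙ :=
    setIntegral_le_integral hMσi (Eventually.of_forall fun ω => maxS_nonneg n (σ ω))
  have h5 : ∫ ω, maxS σ f n (σ ω) ∂ℙ = ∫ ω, maxS σ f n ω ∂ℙ := by
    rw [← integral_map hσ.measurable.aemeasurable
      (maxS_measurable hσ.measurable hf n).aestronglyMeasurable, hσ.map_eq]
  have : 0 ≤ ∫ ω in E, (maxS σ f n ω - maxS σ f n (σ ω)) ∂ℙ := by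
    rw [h2, h3]
    linarith [h4, h5.le, h5.ge]
  linarith

end MaximalErgodic

section Birkhoff

variable {Ω : Type*} [MeasurableSpace Ω] {ℙ : Measure Ω} {σ : Ω → Ω} {f : Ω → ℝ}

/-- The "unbounded deficiency" set used in the proof of the one-sided Birkhoff theorem. -/
def Aset (σ : Ω → Ω) (f : Ω → ℝ) (c : ℝ) : Set Ω :=
  {ω | ∀ M : ℕ, ∃ n : ℕ, (M : ℝ) < c * n - birkhoffSum σ f n ω}

lemma mem_Aset_iff {c : ℝ} {ω : Ω} :
    ω ∈ Aset σ f c ↔ ∀ M : ℝ, ∃ n : ℕ, M < c * n - birkhoffSum σ f n ω := by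
  constructor
  · intro h M
    obtain ⟨M', hM'⟩ := exists_nat_ge M
    obtain ⟨n, hn⟩ := h M'
    exact ⟨n, lt_of_le_of_lt hM' hn⟩
  · intro h M
    exact h M

lemma Aset_measurable (hσ : Measurable σ) (hf : Measurable f) (c : ℝ) :
    MeasurableSet (Aset σ f c) := by
  have : Aset σ f c = ⋂ M : ℕ, ⋃ n : ℕ, {ω | (M : ℝ) < c * n - birkhoffSum σ f n ω} := by
    ext ω; simp [Aset]
  rw [this]
  refine MeasurableSet.iInter fun M => MeasurableSet.iUnion fun n => ?_
  exact measurableSet_lt measurable_const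
    ((measurable_const.sub (birkhoffSum_measurable hσ hf n)).comp measurable_id)

lemma Aset_invariant (c : ℝ) : σ ⁻¹' (Aset σ f c) = Aset σ f c := by
  ext ω
  simp only [Set.mem_preimage]
  rw [mem_Aset_iff, mem_Aset_iff]
  have hS : ∀ n : ℕ, birkhoffSum σ f n (σ ω) = birkhoffSum σ f (n+1) ω - f ω := by
    intro n
    have := birkhoffSum_succ' σ f n ω
    linarith
  constructor
  · intro h M
    obtain ⟨n, hn⟩ := h (M + f ω - c)
    refine ⟨n + 1, ?_⟩
    rw [hS n] at hn
    push_cast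
    push_cast at hn
    linarith
  · intro h M
    obtain ⟨n₁, hn₁⟩ := h (max (M + c - f ω) (max (c - f ω) 0))
    have hn₁0 : n₁ ≠ 0 := by
      rintro rfl
      simp only [Nat.cast_zero, mul_zero, birkhoffSum_zero, sub_zero] at hn₁
      have h2 := le_trans (le_max_right (c - f ω) (0:ℝ))
        (le_max_right (M + c - f ω) (max (c - f ω) 0))
      linarith
    obtain ⟨n, rfl⟩ := Nat.exists_eq_succ_of_ne_zero hn₁0
    refine ⟨n, ?_⟩
    rw [hS n]
    have h1 : M + c - f ω ≤ max (M + c - f ω) (max (c - f ω) 0) := le_max_left _ _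
    push_cast
    push_cast at hn₁
    linarith

end Birkhoff

section Birkhoff2

variable {Ω : Type*} [MeasurableSpace Ω] {ℙ : Measure Ω} {σ : Ω → Ω} {f : Ω → ℝ}

lemma Aset_null [IsProbabilityMeasure ℙ] (hσ : Ergodic σ ℙ) (hf : Measurable f)
    (hfi : Integrable f ℙ) {c : ℝ} (hc : c < ∫ x, f x ∂ℙ) : ℙ (Aset σ f c) = 0 := by
  have hAm := Aset_measurable hσ.measurable hf c
  rcases hσ.ae_empty_or_univ hAm (Aset_invariant c) with h | h
  · have : ℙ (Aset σ f c) = ℙ (∅ : Set Ω) := measure_congr h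
    simpa using this
  · exfalso
    -- f' = c - f
    set f' : Ω → ℝ := fun ω => c - f ω with hf'
    have hf'm : Measurable f' := measurable_const.sub hf
    have hf'i : Integrable f' ℙ := (integrable_const c).sub hfi
    have hS' : ∀ n ω, birkhoffSum σ f' n ω = c * n - birkhoffSum σ f n ω := by
      intro n ω
      unfold birkhoffSum
      rw [Finset.sum_sub_distrib, Finset.sum_const, Finset.card_range]
      simp [mul_comm]
    set E : ℕ → Set Ω := fun n => {ω | 0 < maxS σ f' n ω} with hEdef
    have hEm : ∀ n, MeasurableSet (E n) := fun n =>
      measurableSet_lt measurable_const (maxS_measurable hσ.measurable hf'm n)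
    have hEmono : Monotone E := by
      intro a b hab ω hω
      have h1 : maxS σ f' a ω ≤ maxS σ f' b ω := by
        clear hω
        induction b with
        | zero => simp_all
        | succ b ih =>
          rcases Nat.lt_or_ge a (b+1) with h | h
          · exact le_trans (ih (Nat.lt_succ_iff.mp h)) (le_max_left _ _)
          · have : a = b + 1 := le_antisymm hab h
            subst this
            exact le_rfl
      exact lt_of_lt_of_le hω h1
    have hsub : Aset σ f c ⊆ ⋃ n, E n := by
      intro ω hω
      obtain ⟨n, hn⟩ := hω 0
      have h0 : (0:ℝ) < birkhoffSum σ f' n ω := by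
        rw [hS' n ω]; exact_mod_cast hn
      exact Set.mem_iUnion.2 ⟨n, lt_of_lt_of_le h0 (birkhoffSum_le_maxS le_rfl ω)⟩
    have hunion : ℙ (⋃ n, E n)ᶜ = 0 := by
      have h1 : ℙ (Aset σ f c)ᶜ = 0 := by
        have := measure_congr h
        have huniv : ℙ (Aset σ f c) = 1 := by
          simpa using this
        rw [measure_compl hAm (by simp [huniv])]
        simp [huniv]
      exact measure_mono_null (Set.compl_subset_compl.2 hsub) h1
    -- maximal inequality and limit
    have hmax : ∀ n, 0 ≤ ∫ ω in E n, f' ω ∂ℙ := fun n =>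
      maximal_ergodic hσ.toMeasurePreserving hf'm hf'i n
    have hlim : Tendsto (fun n => ∫ ω in E n, f' ω ∂ℙ) atTop
        (nhds (∫ ω in ⋃ n, E n, f' ω ∂ℙ)) :=
      tendsto_setIntegral_of_monotone hEm hEmono hf'i.integrableOn
    have hge : 0 ≤ ∫ ω in ⋃ n, E n, f' ω ∂ℙ := le_of_tendsto_of_tendsto'
      tendsto_const_nhds hlim hmax
    have heq : ∫ ω in ⋃ n, E n, f' ω ∂ℙ = ∫ ω, f' ω ∂ℙ := by
      rw [← integral_add_compl (MeasurableSet.iUnion hEm) hf'i]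
      rw [show ℙ.restrict (⋃ n, E n)ᶜ = 0 from Measure.restrict_eq_zero.2 hunion]
      simp
    have hint' : ∫ ω, f' ω ∂ℙ = c - ∫ ω, f ω ∂ℙ := by
      rw [hf']
      rw [integral_sub (integrable_const c) hfi]
      simp
    rw [heq, hint'] at hge
    linarith

/-- One-sided pointwise ergodic theorem. -/
lemma birkhoff_onesided [IsProbabilityMeasure ℙ] (hσ : Ergodic σ ℙ) (hf : Measurable f)
    (hfi : Integrable f ℙ) :
    ∀ᵐ ω ∂ℙ, ∀ c : ℝ, c < ∫ x, f x ∂ℙ → ∀ᶠ n : ℕ in atTop,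
      c * n ≤ birkhoffSum σ f n ω := by
  have hq : ∀ᵐ ω ∂ℙ, ∀ q : ℚ, (q:ℝ) < ∫ x, f x ∂ℙ → ω ∉ Aset σ f q := by
    rw [ae_all_iff]
    intro q
    by_cases hq : (q:ℝ) < ∫ x, f x ∂ℙ
    · have := Aset_null hσ hf hfi hq
      filter_upwards [measure_eq_zero_iff_ae_notMem.mp this] with ω hω
      intro _
      exact hω
    · filter_upwards with ω h
      exact absurd h hq
  filter_upwards [hq] with ω hω c hc
  obtain ⟨q, hq1, hq2⟩ := exists_rat_btwn hc
  have hnA := hω q hq2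
  simp only [Aset, Set.mem_setOf_eq, not_forall, not_exists, not_lt] at hnA
  obtain ⟨M, hM⟩ := hnA
  -- c * n ≤ q * n - M for n large
  have hqc : (0:ℝ) < (q:ℝ) - c := by linarith
  obtain ⟨N, hN⟩ := exists_nat_ge ((M:ℝ) / ((q:ℝ) - c))
  filter_upwards [eventually_ge_atTop N] with n hn
  have h1 : (q:ℝ) * n - birkhoffSum σ f n ω ≤ M := hM n
  have h2 : (M:ℝ) ≤ ((q:ℝ) - c) * n := by
    rw [div_le_iff₀ hqc] at hN
    calc (M:ℝ) ≤ N * ((q:ℝ) - c) := hN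
    _ ≤ n * ((q:ℝ) - c) := by
        apply mul_le_mul_of_nonneg_right _ hqc.le
        exact_mod_cast hn
    _ = ((q:ℝ) - c) * n := mul_comm _ _
  nlinarith [h1, h2]

/-- Pointwise ergodic theorem: a.e. convergence of Birkhoff averages. -/
lemma birkhoff_ae [IsProbabilityMeasure ℙ] (hσ : Ergodic σ ℙ) (hf : Measurable f)
    (hfi : Integrable f ℙ) :
    ∀ᵐ ω ∂ℙ, Tendsto (fun n : ℕ => birkhoffSum σ f n ω / n) atTop
      (nhds (∫ x, f x ∂ℙ)) := by
  have hneg : ∀ n ω, birkhoffSum σ (fun x => -f x) n ω = -birkhoffSum σ f n ω := by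
    intro n ω
    unfold birkhoffSum
    rw [← Finset.sum_neg_distrib]
  have hintneg : ∫ x, -f x ∂ℙ = -∫ x, f x ∂ℙ := integral_neg f
  filter_upwards [birkhoff_onesided hσ hf hfi, birkhoff_onesided hσ hf.neg hfi.neg]
    with ω h1 h2
  set I := ∫ x, f x ∂ℙ
  rw [tendsto_order]
  constructor
  · intro a ha
    have := h1 ((a + I)/2) (by linarith)
    filter_upwards [this, eventually_ge_atTop 1] with n hn hn1
    have hnpos : (0:ℝ) < n := by exact_mod_cast hn1
    rw [lt_div_iff₀ hnpos]
    calc a * n < (a + I)/2 * n := by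
          apply mul_lt_mul_of_pos_right _ hnpos
          linarith
    _ ≤ birkhoffSum σ f n ω := hn
  · intro b hb
    have := h2 ((-b - I)/2) (by rw [show ∫ x, (-f) x ∂ℙ = -I from hintneg]; linarith)
    filter_upwards [this, eventually_ge_atTop 1] with n hn hn1
    have hnpos : (0:ℝ) < n := by exact_mod_cast hn1
    rw [div_lt_iff₀ hnpos]
    rw [show birkhoffSum σ (-f) n ω = -birkhoffSum σ f n ω from hneg n ω] at hn
    calc birkhoffSum σ f n ω ≤ -((-b - I)/2) * n := by linarith
    _ < b * n := by
        apply mul_lt_mul_of_pos_right _ hnpos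
        linarith
end Birkhoff2

lemma arith1 {J ρ nR mR Tn Tm : ℝ} (hJ0 : 0 ≤ J) (hρpos : 0 < ρ)
    (hTn : Tn < (J+ρ)*nR) (hTm : (J-ρ)*mR ≤ Tm)
    (hmlb : (1-2*ρ)*nR - 1 ≤ mR) (hmn : mR ≤ nR) :
    Tn - Tm ≤ 2*ρ*(J+1)*nR + J := by
  have h1 : nR - mR ≤ 2*ρ*nR + 1 := by nlinarith
  have h2 : J*(nR-mR) ≤ J*(2*ρ*nR+1) := mul_le_mul_of_nonneg_left h1 hJ0
  have h3 : ρ*mR ≤ ρ*nR := mul_le_mul_of_nonneg_left hmn hρpos.le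
  nlinarith [h2, h3, hTn, hTm]

set_option maxHeartbeats 1000000 in
open Real in
/-- main -/
theorem stmt18 {Ω : Type*} [MeasurableSpace Ω] (ℙ : Measure Ω) [IsProbabilityMeasure ℙ]
    (σ : Ω → Ω) (hσ : Ergodic σ ℙ)
    (w : Ω → ℝ) (e : Ω → ℕ → ℝ)
    (hwmeas : Measurable w) (hemeas : Measurable fun ω => e ω 1)
    (hw : ∀ᵐ ω ∂ℙ, 0 < w ω ∧ w ω ≤ 1)
    (hepos : ∀ᵐ ω ∂ℙ, ∀ n, 0 < e ω n)
    (hsm : ∀ᵐ ω ∂ℙ, ∀ n : ℕ, ∏ k ∈ Finset.range n, e (σ^[k] ω) 1 ≤ e ω n)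
    (hpos_op : ∀ᵐ ω ∂ℙ, ∀ n : ℕ, w ω * e ω n ≤ w (σ^[n] ω))
    (hint : Integrable (fun ω => Real.log (e ω 1)) ℙ) :
    (∀ᵐ ω ∂ℙ,
      (∫ ω', Real.log (e ω' 1) ∂ℙ) ≤
        liminf (fun n : ℕ => Real.log (w (σ^[n] ω)) / (n : ℝ)) atTop) ∧
    (∀ᵐ ω ∂ℙ,
      Tendsto (fun n : ℕ => Real.log (w (σ^[n] ω)) / (n : ℝ)) atTop (nhds 0)) := by
  classical
  set h : Ω → ℝ := fun ω => Real.log (e ω 1) with hh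
  have hmeas : Measurable h := Real.measurable_log.comp hemeas
  set habs : Ω → ℝ := fun ω => |h ω| with hhabs
  have habsmeas : Measurable habs := hmeas.abs
  have habsint : Integrable habs ℙ := hint.abs
  set I : ℝ := ∫ x, h x ∂ℙ with hI
  set J : ℝ := ∫ x, habs x ∂ℙ with hJ
  have hJ0 : 0 ≤ J := integral_nonneg fun ω => abs_nonneg _
  -- the family of sets Bk
  set B : ℕ → Set Ω := fun k => {ω | 1/((k:ℝ)+1) ≤ w ω} with hB
  have hBmeas : ∀ k, MeasurableSet (B k) := fun k => hwmeas measurableSet_Ici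
  set ind : ℕ → Ω → ℝ := fun k => (B k).indicator (fun _ => (1:ℝ)) with hind
  have hindmeas : ∀ k, Measurable (ind k) := fun k => measurable_const.indicator (hBmeas k)
  have hindint : ∀ k, Integrable (ind k) ℙ := fun k => (integrable_const 1).indicator (hBmeas k)
  have hindval : ∀ k, ∫ x, ind k x ∂ℙ = (ℙ (B k)).toReal := by
    intro k
    rw [hind]
    simp only [integral_indicator_const (1:ℝ) (hBmeas k), smul_eq_mul, mul_one]
    rfl
  -- measure of Bk tends to 1
  have hBmono : Monotone B := by
    intro a b hab ω hω
    have hω' : 1/((a:ℝ)+1) ≤ w ω := hω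
    show 1/((b:ℝ)+1) ≤ w ω
    refine le_trans ?_ hω'
    apply one_div_le_one_div_of_le (by positivity)
    have : (a:ℝ) ≤ b := by exact_mod_cast hab
    linarith
  have hBunion : ℙ (⋃ k, B k) = 1 := by
    have hsub : {ω | 0 < w ω} ⊆ ⋃ k, B k := by
      intro ω hω
      have hωpos : 0 < w ω := hω
      obtain ⟨k, hk⟩ := exists_nat_ge (1 / w ω)
      refine Set.mem_iUnion.2 ⟨k, ?_⟩
      show 1/((k:ℝ)+1) ≤ w ω
      rw [div_le_iff₀ (by positivity)]
      rw [div_le_iff₀ hωpos] at hk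
      nlinarith
    have h1 : ℙ {ω | 0 < w ω} = 1 := by
      show ℙ (w ⁻¹' Set.Ioi 0) = 1
      rw [← prob_compl_eq_zero_iff (hwmeas measurableSet_Ioi)]
      have hnull : ℙ {ω | ¬(0 < w ω ∧ w ω ≤ 1)} = 0 := ae_iff.mp hw
      have hss : {ω | 0 < w ω}ᶜ ⊆ {ω | ¬(0 < w ω ∧ w ω ≤ 1)} := by
        intro ω hω
        simp only [Set.mem_compl_iff, Set.mem_setOf_eq] at hω ⊢
        tauto
      exact measure_mono_null hss hnull
    refine le_antisymm (prob_le_one) ?_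
    rw [← h1]
    exact measure_mono hsub
  have hBtend : Tendsto (fun k => (ℙ (B k)).toReal) atTop (nhds 1) := by
    have h1 : Tendsto (fun k => ℙ (B k)) atTop (nhds (ℙ (⋃ k, B k))) :=
      tendsto_measure_iUnion_atTop hBmono
    rw [hBunion] at h1
    have := (ENNReal.tendsto_toReal (by norm_num)).comp h1
    exact this
  -- good set pieces
  have hQ : ∀ᵐ ω ∂ℙ, (0 < w ω ∧ w ω ≤ 1) ∧ (∀ n, 0 < e ω n) ∧
      (∀ n : ℕ, ∏ k ∈ Finset.range n, e (σ^[k] ω) 1 ≤ e ω n) ∧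
      (∀ n : ℕ, w ω * e ω n ≤ w (σ^[n] ω)) := by
    filter_upwards [hw, hepos, hsm, hpos_op] with ω h1 h2 h3 h4
    exact ⟨h1, h2, h3, h4⟩
  have hGA : ∀ᵐ ω ∂ℙ, ∀ m : ℕ, (0 < w (σ^[m] ω) ∧ w (σ^[m] ω) ≤ 1) ∧
      (∀ n, 0 < e (σ^[m] ω) n) ∧
      (∀ n : ℕ, ∏ k ∈ Finset.range n, e (σ^[k] (σ^[m] ω)) 1 ≤ e (σ^[m] ω) n) ∧
      (∀ n : ℕ, w (σ^[m] ω) * e (σ^[m] ω) n ≤ w (σ^[n] (σ^[m] ω))) := by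
    rw [ae_all_iff]
    intro m
    exact (hσ.toMeasurePreserving.iterate m).quasiMeasurePreserving.ae hQ
  have hGB : ∀ᵐ ω ∂ℙ, Tendsto (fun n : ℕ => birkhoffSum σ h n ω / n) atTop (nhds I) :=
    birkhoff_ae hσ hmeas hint
  have hGC : ∀ᵐ ω ∂ℙ, Tendsto (fun n : ℕ => birkhoffSum σ habs n ω / n) atTop (nhds J) :=
    birkhoff_ae hσ habsmeas habsint
  have hGD : ∀ᵐ ω ∂ℙ, ∀ k : ℕ, ∀ c : ℝ, c < (ℙ (B k)).toReal →
      ∀ᶠ n : ℕ in atTop, c * n ≤ birkhoffSum σ (ind k) n ω := by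
    rw [ae_all_iff]
    intro k
    have := birkhoff_onesided hσ (hindmeas k) (hindint k)
    rw [hindval k] at this
    exact this
  -- pointwise part
  have main : ∀ᵐ ω ∂ℙ,
      (I ≤ liminf (fun n : ℕ => Real.log (w (σ^[n] ω)) / (n : ℝ)) atTop) ∧
      Tendsto (fun n : ℕ => Real.log (w (σ^[n] ω)) / (n : ℝ)) atTop (nhds 0) := by
    filter_upwards [hGA, hGB, hGC, hGD] with ω hA hB' hC hD
    -- Key inequality along the orbit
    have key1 : ∀ m n : ℕ, Real.log (w (σ^[m] ω)) + birkhoffSum σ h n (σ^[m] ω)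
        ≤ Real.log (w (σ^[m + n] ω)) := by
      intro m n
      set x := σ^[m] ω with hx
      have hwx : 0 < w x := (hA m).1.1
      have hepos' : ∀ k : ℕ, 0 < e (σ^[k] x) 1 := by
        intro k
        have hxx : σ^[k] x = σ^[k + m] ω := by
          rw [hx, ← Function.iterate_add_apply]
        rw [hxx]
        exact (hA (k+m)).2.1 1
      have hprodpos : 0 < ∏ k ∈ Finset.range n, e (σ^[k] x) 1 :=
        Finset.prod_pos fun k _ => hepos' k
      have hchain : w x * ∏ k ∈ Finset.range n, e (σ^[k] x) 1 ≤ w (σ^[m+n] ω) := by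
        have h1 : w x * ∏ k ∈ Finset.range n, e (σ^[k] x) 1 ≤ w x * e x n :=
          mul_le_mul_of_nonneg_left ((hA m).2.2.1 n) hwx.le
        have h2 : w x * e x n ≤ w (σ^[n] x) := (hA m).2.2.2 n
        have h3 : σ^[n] x = σ^[m+n] ω := by
          rw [hx, ← Function.iterate_add_apply, add_comm]
        rw [h3] at h2
        linarith
      have hlog := (Real.log_le_log_iff (by positivity) ((hA (m+n)).1.1)).mpr hchain
      rw [Real.log_mul hwx.ne' hprodpos.ne',
        Real.log_prod (fun k _ => (hepos' k).ne')] at hlog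
      have hbs : ∑ k ∈ Finset.range n, Real.log (e (σ^[k] x) 1) = birkhoffSum σ h n x := rfl
      rw [hbs] at hlog
      exact hlog
    have hwpos : ∀ n : ℕ, 0 < w (σ^[n] ω) := fun n => (hA n).1.1
    have hgnonpos : ∀ n : ℕ, Real.log (w (σ^[n] ω)) ≤ 0 := fun n =>
      Real.log_nonpos (hwpos n).le (hA n).1.2
    set u : ℕ → ℝ := fun n => Real.log (w (σ^[n] ω)) / n with hu
    have hunonpos : ∀ n : ℕ, u n ≤ 0 := by
      intro n
      apply div_nonpos_of_nonpos_of_nonneg (hgnonpos n) (Nat.cast_nonneg n)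
    constructor
    · -- liminf lower bound
      have hbdd : IsBoundedUnder (· ≤ ·) atTop u :=
        ⟨0, eventually_map.2 (Eventually.of_forall hunonpos)⟩
      have hcob : IsCoboundedUnder (· ≥ ·) atTop u := hbdd.isCoboundedUnder_ge
      have hv : Tendsto (fun n : ℕ => (Real.log (w ω) + birkhoffSum σ h n ω) / n)
          atTop (nhds I) := by
        have h1 : Tendsto (fun n : ℕ => Real.log (w ω) / n) atTop (nhds 0) :=
          tendsto_const_div_atTop_nhds_zero_nat _
        have h2 := h1.add hB'
        rw [zero_add] at h2
        refine h2.congr fun n => ?_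
        rw [add_div]
      refine le_of_forall_lt fun a ha => ?_
      have hmid : (a + I)/2 < I := by linarith
      have hev : ∀ᶠ n in atTop, (a+I)/2 ≤ u n := by
        filter_upwards [hv.eventually_const_lt hmid, eventually_ge_atTop 1] with n h1 h2
        have hnpos : (0:ℝ) < n := by exact_mod_cast h2
        have hkey := key1 0 n
        simp only [Function.iterate_zero, id_eq, zero_add] at hkey
        have h3 : (Real.log (w ω) + birkhoffSum σ h n ω)/(n:ℝ) ≤ u n :=
          (div_le_div_iff_of_pos_right hnpos).mpr hkey
        linarith
      exact lt_of_lt_of_le (by linarith : a < (a+I)/2) (le_liminf_of_le hcob hev)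
    · -- temperedness
      rw [tendsto_order]
      constructor
      · intro a ha
        set ε : ℝ := -a with hε
        have hεpos : 0 < ε := by simp only [hε]; linarith
        set ρ : ℝ := min (ε / (8 * (J + 1))) (1/4) with hρ
        have hρpos : 0 < ρ := lt_min (by positivity) (by norm_num)
        have hρ4 : ρ ≤ 1/4 := min_le_right _ _
        have hρε : 2 * ρ * (J + 1) ≤ ε / 4 := by
          have hle : ρ ≤ ε / (8 * (J + 1)) := min_le_left _ _
          have hJ1 : (0:ℝ) < J + 1 := by linarith
          calc 2 * ρ * (J+1) ≤ 2 * (ε / (8 * (J+1))) * (J+1) := by nlinarith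
          _ = ε/4 := by field_simp; ring
        obtain ⟨k₀, hk₀⟩ := (hBtend.eventually_const_lt (by linarith : 1 - ρ < 1)).exists
        set δ : ℝ := 1/((k₀:ℝ)+1) with hδ
        have hδpos : 0 < δ := by positivity
        have hδ1 : δ ≤ 1 := by
          rw [hδ, div_le_one (by positivity)]
          linarith [Nat.cast_nonneg (α := ℝ) k₀]
        have hdens : ∀ᶠ n : ℕ in atTop, (1 - 2*ρ) * n ≤ birkhoffSum σ (ind k₀) n ω :=
          hD k₀ (1 - 2*ρ) (by linarith)
        set T : ℕ → ℝ := fun n => birkhoffSum σ habs n ω with hT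
        obtain ⟨N₁, hN₁⟩ := Metric.tendsto_atTop.mp hC ρ hρpos
        have hsmallev : ∀ᶠ n : ℕ in atTop, (J - Real.log δ)/(n:ℝ) < ε / 4 :=
          (tendsto_const_div_atTop_nhds_zero_nat (J - Real.log δ)).eventually_lt_const
            (by positivity)
        filter_upwards [hdens, hsmallev, eventually_ge_atTop 1, eventually_ge_atTop N₁,
          eventually_ge_atTop (2*N₁+2)] with n hdn hsm2 hn1 hnN1 hn2
        have hnpos : (0:ℝ) < n := by exact_mod_cast hn1
        set P : ℕ → Prop := fun i => σ^[i] ω ∈ B k₀ with hP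
        have hcpos : 0 < birkhoffSum σ (ind k₀) n ω := by
          refine lt_of_lt_of_le ?_ hdn
          exact mul_pos (by linarith) hnpos
        have hex : ∃ i, i < n ∧ P i := by
          by_contra hcon
          push_neg at hcon
          have hzero : birkhoffSum σ (ind k₀) n ω = 0 := by
            apply Finset.sum_eq_zero
            intro i hi
            exact Set.indicator_of_notMem (hcon i (Finset.mem_range.mp hi)) _
          rw [hzero] at hcpos
          exact lt_irrefl _ hcpos
        obtain ⟨i₀, hi₀n, hPi₀⟩ := hex
        set m := Nat.findGreatest P (n-1) with hm
        have hi₀le : i₀ ≤ n - 1 := by omega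
        have hPm : P m := Nat.findGreatest_spec hi₀le hPi₀
        have hmn : m ≤ n - 1 := Nat.findGreatest_le _
        have hmltn : m < n := by omega
        have hmcast : (m:ℝ) ≤ (n:ℝ) := by exact_mod_cast hmltn.le
        have hcount : birkhoffSum σ (ind k₀) n ω ≤ (m:ℝ) + 1 := by
          have hterm : ∀ i ∈ Finset.range n, ind k₀ (σ^[i] ω) ≤ if i ≤ m then (1:ℝ) else 0 := by
            intro i hi
            have hin : i < n := Finset.mem_range.mp hi
            by_cases hip : P i
            · have him : i ≤ m := Nat.le_findGreatest (by omega) hip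
              rw [if_pos him]
              rw [hind]
              exact Set.indicator_le_self' (fun _ _ => zero_le_one) _
            · have hz : ind k₀ (σ^[i] ω) = 0 := Set.indicator_of_notMem hip _
              rw [hz]
              split <;> norm_num
          calc birkhoffSum σ (ind k₀) n ω
              ≤ ∑ i ∈ Finset.range n, (if i ≤ m then (1:ℝ) else 0) :=
                Finset.sum_le_sum hterm
            _ = (((Finset.range n).filter (fun i => i ≤ m)).card : ℝ) := by
                rw [Finset.sum_boole]
            _ ≤ (m:ℝ) + 1 := by
                have hss : (Finset.range n).filter (fun i => i ≤ m) ⊆ Finset.range (m+1) := by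
                  intro i hi
                  simp only [Finset.mem_filter, Finset.mem_range] at hi ⊢
                  omega
                have hcard := Finset.card_le_card hss
                rw [Finset.card_range] at hcard
                exact_mod_cast hcard
        have hmlb : (1 - 2*ρ) * n - 1 ≤ (m:ℝ) := by linarith
        have hmN₁ : N₁ ≤ m := by
          have h2 : (2*(N₁:ℝ) + 2) ≤ n := by exact_mod_cast hn2
          have h4 : (1/2 : ℝ) * n ≤ (1-2*ρ) * n :=
            mul_le_mul_of_nonneg_right (by linarith) hnpos.le
          have h3 : ((N₁:ℝ)) ≤ m := by linarith
          exact_mod_cast h3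
        have hgn : Real.log (w (σ^[m] ω)) + birkhoffSum σ h (n - m) (σ^[m] ω)
            ≤ Real.log (w (σ^[n] ω)) := by
          have hk := key1 m (n - m)
          rwa [Nat.add_sub_cancel' hmltn.le] at hk
        have hTsplit : T n = T m + birkhoffSum σ habs (n-m) (σ^[m] ω) := by
          rw [hT]
          conv_lhs => rw [show n = m + (n - m) by omega]
          exact birkhoffSum_add σ habs m (n-m) ω
        have hhabslb : -(birkhoffSum σ habs (n-m) (σ^[m] ω))
            ≤ birkhoffSum σ h (n-m) (σ^[m] ω) := by
          unfold birkhoffSum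
          rw [← Finset.sum_neg_distrib]
          apply Finset.sum_le_sum
          intro i _
          exact neg_abs_le _
        have hwm : δ ≤ w (σ^[m] ω) := hPm
        have hgm : Real.log δ ≤ Real.log (w (σ^[m] ω)) :=
          (Real.log_le_log_iff hδpos (hA m).1.1).mpr hwm
        have hTn : T n < (J + ρ) * n := by
          have hd := hN₁ n hnN1
          rw [Real.dist_eq] at hd
          have hd2 := (abs_lt.mp hd).2
          have : T n / n < J + ρ := by linarith
          calc T n = (T n / n) * n := by field_simp
          _ < (J + ρ) * n := by exact mul_lt_mul_of_pos_right this hnpos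
        have hTm : (J - ρ) * m ≤ T m := by
          rcases Nat.eq_zero_or_pos m with hm0 | hmpos
          · have hT0 : T 0 = 0 := birkhoffSum_zero σ habs ω
            rw [hm0, hT0]
            simp
          · have hmposR : (0:ℝ) < m := by exact_mod_cast hmpos
            have hd := hN₁ m hmN₁
            rw [Real.dist_eq] at hd
            have hd2 := (abs_lt.mp hd).1
            have : J - ρ < T m / m := by linarith
            calc (J - ρ) * m ≤ (T m / m) * m := by
                  exact mul_le_mul_of_nonneg_right this.le hmposR.le
            _ = T m := by field_simp
        -- assemble
        have hTdiff : T n - T m ≤ 2*ρ*(J+1)*n + J :=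
          arith1 hJ0 hρpos hTn hTm hmlb hmcast
        have hglb : Real.log δ - J - 2*ρ*(J+1)*n ≤ Real.log (w (σ^[n] ω)) := by
          have hdiff : birkhoffSum σ habs (n-m) (σ^[m] ω) = T n - T m := by linarith
          rw [hdiff] at hhabslb
          linarith
        have hdiv : (Real.log δ - J - 2*ρ*(J+1)*n)/(n:ℝ) ≤ u n :=
          (div_le_div_iff_of_pos_right hnpos).mpr hglb
        have hsplit2 : (Real.log δ - J - 2*ρ*(J+1)*n)/(n:ℝ)
            = (Real.log δ - J)/(n:ℝ) - 2*ρ*(J+1) := by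
          field_simp
        rw [hsplit2] at hdiv
        have hfrac : -(ε/4) < (Real.log δ - J)/(n:ℝ) := by
          have : (Real.log δ - J)/(n:ℝ) = -((J - Real.log δ)/(n:ℝ)) := by ring
          rw [this]
          linarith
        show a < u n
        have : a = -ε := by rw [hε]; ring
        rw [this]
        linarith
      · intro b hb
        filter_upwards [eventually_ge_atTop 1] with n hn
        exact lt_of_le_of_lt (hunonpos n) hb
  exact ⟨main.mono fun ω hω => hω.1, main.mono fun ω hω => hω.2⟩
end
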